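/- arXiv:2509.25917 — 2 statements merged into one kernel-verified Lean document; each statement's English description precedes it below -/
import Mathlib

section
/- Let a > 0 and let L : (0,∞) → (0,∞) be measurable, slowly varying at infinity, and locally bounded on [a,∞). Then for every r > 1, the integral ∫_x^∞ t^{-r} L(t) dt is finite for all sufficiently large x, and it is asymptotically equivalent to x^{1-r} L(x)/(r-1) as x → ∞, i.e. the ratio of the two quantities tends to 1. -/
open MeasureTheory Filter Set Real

/-- `L` is slowly varying at infinity: for every `c > 0`, `L (c*x) / L x → 1` as `x → ∞`. -/
def SlowlyVarying (L : ℝ → ℝ) : Prop :=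
  ∀ c : ℝ, 0 < c → Tendsto (fun x => L (c * x) / L x) atTop (nhds 1)

private lemma sv_exp_tendsto (L : ℝ → ℝ) (hLpos : ∀ x, 0 < x → 0 < L x)
    (hSV : SlowlyVarying L) (t : ℝ) :
    Tendsto (fun u : ℝ => Real.log (L (Real.exp (u + t))) - Real.log (L (Real.exp u)))
      atTop (nhds 0) := by
  have h1 : Tendsto (fun u : ℝ => L (Real.exp t * Real.exp u) / L (Real.exp u)) atTop (nhds 1) :=
    (hSV _ (Real.exp_pos t)).comp Real.tendsto_exp_atTop
  have h2 := (Real.continuousAt_log one_ne_zero).tendsto.comp h1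
  rw [Real.log_one] at h2
  apply h2.congr
  intro u
  simp only [Function.comp_apply]
  rw [show Real.exp t * Real.exp u = Real.exp (u + t) by rw [← Real.exp_add, add_comm],
    Real.log_div (hLpos _ (Real.exp_pos _)).ne' (hLpos _ (Real.exp_pos _)).ne']

/-- Uniform convergence theorem for slowly varying functions (log form), via Egorov. -/
private lemma uct (L : ℝ → ℝ) (hLmeas : Measurable L) (hLpos : ∀ x, 0 < x → 0 < L x)
    (hSV : SlowlyVarying L) {δ : ℝ} (hδ : 0 < δ) :
    ∃ X : ℝ, ∀ u ≥ X, ∀ t ∈ Icc (0:ℝ) 1,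
      |Real.log (L (Real.exp (u + t))) - Real.log (L (Real.exp u))| ≤ δ := by
  by_contra hcon
  push_neg at hcon
  choose u hu t ht hgt using hcon
  set h : ℝ → ℝ := fun x => Real.log (L (Real.exp x)) with hh
  have hmeas : Measurable h := Real.measurable_log.comp (hLmeas.comp Real.measurable_exp)
  set U : ℕ → ℝ := fun n => u (n : ℝ) with hUdef
  set T : ℕ → ℝ := fun n => t (n : ℝ) with hTdef
  have hT01 : ∀ n, T n ∈ Icc (0:ℝ) 1 := fun n => ht _
  have hU : Tendsto U atTop atTop :=
    tendsto_atTop_mono (fun n => hu (n : ℝ)) tendsto_natCast_atTop_atTop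
  have hV : Tendsto (fun n => U n + T n) atTop atTop :=
    tendsto_atTop_mono (fun n => le_add_of_nonneg_right (hT01 n).1) hU
  set F : ℕ → ℝ → ℝ := fun n s => h (U n + s) - h (U n) with hFdef
  set G : ℕ → ℝ → ℝ := fun n s => h (U n + T n + s) - h (U n + T n) with hGdef
  have hFm : ∀ n, StronglyMeasurable (F n) :=
    fun n => ((hmeas.comp (measurable_id.const_add (U n))).sub measurable_const).stronglyMeasurable
  have hGm : ∀ n, StronglyMeasurable (G n) :=
    fun n => ((hmeas.comp (measurable_id.const_add (U n + T n))).sub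
      measurable_const).stronglyMeasurable
  have hFlim : ∀ s : ℝ, Tendsto (fun n => F n s) atTop (nhds 0) :=
    fun s => (sv_exp_tendsto L hLpos hSV s).comp hU
  have hGlim : ∀ s : ℝ, Tendsto (fun n => G n s) atTop (nhds 0) :=
    fun s => (sv_exp_tendsto L hLpos hSV s).comp hV
  have hIccFin : volume (Icc (0:ℝ) 2) ≠ ⊤ := by
    rw [Real.volume_Icc]; exact ENNReal.ofReal_ne_top
  obtain ⟨EF, hEFsub, hEFm, hEFμ, hFU⟩ :=
    tendstoUniformlyOn_of_ae_tendsto (μ := volume) (s := Icc (0:ℝ) 2) hFm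
      stronglyMeasurable_const measurableSet_Icc hIccFin
      (Filter.Eventually.of_forall (fun s _ => hFlim s)) (by norm_num : (0:ℝ) < 1/5)
  obtain ⟨EG, hEGsub, hEGm, hEGμ, hGU⟩ :=
    tendstoUniformlyOn_of_ae_tendsto (μ := volume) (s := Icc (0:ℝ) 2) hGm
      stronglyMeasurable_const measurableSet_Icc hIccFin
      (Filter.Eventually.of_forall (fun s _ => hGlim s)) (by norm_num : (0:ℝ) < 1/5)
  set S : Set ℝ := Icc (0:ℝ) 2 \ (EF ∪ EG) with hSdef
  have hSm : MeasurableSet S := measurableSet_Icc.diff (hEFm.union hEGm)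
  have hSsub : S ⊆ Icc (0:ℝ) 2 := diff_subset
  have hSl : ENNReal.ofReal (8/5) ≤ volume S := by
    have hcover : Icc (0:ℝ) 2 ⊆ S ∪ (EF ∪ EG) := fun x hx => by
      by_cases hx2 : x ∈ EF ∪ EG
      · exact Or.inr hx2
      · exact Or.inl ⟨hx, hx2⟩
    have h1 : ENNReal.ofReal 2 ≤ volume S + ENNReal.ofReal (2/5) := by
      have e : ENNReal.ofReal (1/5) + ENNReal.ofReal (1/5) = ENNReal.ofReal (2/5) := by
        rw [← ENNReal.ofReal_add] <;> norm_num
      calc ENNReal.ofReal 2 = volume (Icc (0:ℝ) 2) := by rw [Real.volume_Icc]; norm_num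
        _ ≤ volume (S ∪ (EF ∪ EG)) := measure_mono hcover
        _ ≤ volume S + volume (EF ∪ EG) := measure_union_le _ _
        _ ≤ volume S + (volume EF + volume EG) := by gcongr; exact measure_union_le _ _
        _ ≤ volume S + (ENNReal.ofReal (1/5) + ENNReal.ofReal (1/5)) := by gcongr
        _ = volume S + ENNReal.ofReal (2/5) := by rw [e]
    calc ENNReal.ofReal (8/5) = ENNReal.ofReal 2 - ENNReal.ofReal (2/5) := by
          rw [← ENNReal.ofReal_sub _ (by norm_num : (0:ℝ) ≤ 2/5)]; norm_num
      _ ≤ volume S := tsub_le_iff_right.mpr h1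
  have hT : ∀ n : ℕ, ∃ w, w ∈ S ∧ w + T n ∈ S := by
    intro n
    by_contra hemp
    push_neg at hemp
    set P : Set ℝ := (fun w => w + T n) ⁻¹' S with hPdef
    have hPm : MeasurableSet P := (measurable_add_const (T n)) hSm
    have hdisj : Disjoint S P := by
      rw [Set.disjoint_left]
      intro w hw hw'
      exact hemp w hw hw'
    have hPvol : volume P = volume S := measure_preimage_add_right volume (T n) S
    have hsub3 : S ∪ P ⊆ Icc (-1:ℝ) 2 := by
      rintro w (hw | hw)
      · exact ⟨by linarith [(hSsub hw).1], (hSsub hw).2⟩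
      · have hw' : w + T n ∈ Icc (0:ℝ) 2 := hSsub hw
        have h1 := hw'.1
        have h2 := hw'.2
        have h3 := (hT01 n).1
        have h4 := (hT01 n).2
        exact ⟨by linarith, by linarith⟩
    have hbig : ENNReal.ofReal (16/5) ≤ ENNReal.ofReal 3 := by
      calc ENNReal.ofReal (16/5) = ENNReal.ofReal (8/5) + ENNReal.ofReal (8/5) := by
            rw [← ENNReal.ofReal_add] <;> norm_num
        _ ≤ volume S + volume P := by rw [hPvol]; gcongr
        _ = volume (S ∪ P) := (measure_union hdisj hPm).symm
        _ ≤ volume (Icc (-1:ℝ) 2) := measure_mono hsub3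
        _ = ENNReal.ofReal 3 := by rw [Real.volume_Icc]; norm_num
    rw [ENNReal.ofReal_le_ofReal_iff (by norm_num)] at hbig
    norm_num at hbig
  choose w hw1 hw2 using hT
  have hFU' : TendstoUniformlyOn F (fun _ => 0) atTop S :=
    hFU.mono (diff_subset_diff_right subset_union_left)
  have hGU' : TendstoUniformlyOn G (fun _ => 0) atTop S :=
    hGU.mono (diff_subset_diff_right subset_union_right)
  rw [Metric.tendstoUniformlyOn_iff] at hFU' hGU'
  obtain ⟨n, hn1, hn2⟩ := ((hFU' (δ/2) (by linarith)).and (hGU' (δ/2) (by linarith))).exists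
  have hs1 : |F n (w n + T n)| < δ/2 := by
    have := hn1 _ (hw2 n)
    rwa [Real.dist_eq, zero_sub, abs_neg] at this
  have hs2 : |G n (w n)| < δ/2 := by
    have := hn2 _ (hw1 n)
    rwa [Real.dist_eq, zero_sub, abs_neg] at this
  have key : h (U n + T n) - h (U n) = F n (w n + T n) - G n (w n) := by
    simp only [hFdef, hGdef]
    have e : U n + T n + w n = U n + (w n + T n) := by ring
    rw [e]
    ring
  have hgt' : δ < |h (U n + T n) - h (U n)| := hgt (n : ℝ)
  rw [key] at hgt'
  have habs : |F n (w n + T n) - G n (w n)| ≤ |F n (w n + T n)| + |G n (w n)| := abs_sub _ _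
  linarith

/-- Chaining the UCT bound over unit steps. -/
private lemma chain (h : ℝ → ℝ) (X δ : ℝ) (hδ : 0 ≤ δ)
    (hX : ∀ u ≥ X, ∀ t ∈ Icc (0:ℝ) 1, |h (u + t) - h u| ≤ δ) :
    ∀ u ≥ X, ∀ t ≥ (0:ℝ), h (u + t) - h u ≤ δ * (t + 1) := by
  have main : ∀ n : ℕ, ∀ u ≥ X, ∀ t ∈ Icc (0:ℝ) ((n : ℝ) + 1),
      h (u + t) - h u ≤ δ * ((n : ℝ) + 1) := by
    intro n
    induction n with
    | zero =>
      intro u hu t htt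
      have := (abs_le.1 (hX u hu t (by simpa using htt))).2
      push_cast
      linarith
    | succ n ih =>
      intro u hu t htt
      by_cases hc : t ≤ (n : ℝ) + 1
      · have h1 := ih u hu t ⟨htt.1, hc⟩
        have h2 : δ * ((n : ℝ) + 1) ≤ δ * (((n : ℕ) + 1 : ℕ) + 1) := by
          apply mul_le_mul_of_nonneg_left _ hδ
          push_cast
          linarith
        linarith
      · push_neg at hc
        have htt2 : t ≤ ((n : ℕ) + 1 : ℕ) + 1 := htt.2
        push_cast at htt2
        have h1 : h (u + 1 + (t - 1)) - h (u + 1) ≤ δ * ((n : ℝ) + 1) :=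
          ih (u + 1) (by linarith) (t - 1) ⟨by linarith, by linarith⟩
        have h2 : h (u + 1) - h u ≤ δ :=
          (abs_le.1 (hX u hu 1 (by norm_num))).2
        have e : u + 1 + (t - 1) = u + t := by ring
        rw [e] at h1
        push_cast
        linarith
  intro u hu t htt
  have h1 := main ⌊t⌋₊ u hu t ⟨htt, (Nat.lt_floor_add_one t).le⟩
  have h2 : (⌊t⌋₊ : ℝ) ≤ t := Nat.floor_le htt
  nlinarith

/-- Potter-type bound. -/
private lemma potter (a : ℝ) (L : ℝ → ℝ) (hLmeas : Measurable L)
    (hLpos : ∀ x, 0 < x → 0 < L x) (hSV : SlowlyVarying L) {δ : ℝ} (hδ : 0 < δ) :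
    ∃ X : ℝ, max a 1 ≤ X ∧ ∀ x ≥ X, ∀ s ≥ (1:ℝ),
      L (s * x) ≤ Real.exp δ * s ^ δ * L x := by
  obtain ⟨X₀, hX₀⟩ := uct L hLmeas hLpos hSV hδ
  refine ⟨max (Real.exp X₀) (max a 1), le_max_right _ _, ?_⟩
  intro x hx s hs
  have hx1 : (1:ℝ) ≤ x := le_trans ((le_max_right a 1).trans (le_max_right _ _)) hx
  have hx0 : 0 < x := lt_of_lt_of_le one_pos hx1
  have hs0 : 0 < s := lt_of_lt_of_le one_pos hs
  have hlogx : X₀ ≤ Real.log x := by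
    rw [Real.le_log_iff_exp_le hx0]
    exact (le_max_left _ _).trans hx
  have hchain := chain (fun y => Real.log (L (Real.exp y))) X₀ δ hδ.le hX₀
    (Real.log x) hlogx (Real.log s) (Real.log_nonneg hs)
  rw [← Real.log_mul hx0.ne' hs0.ne', Real.exp_log (mul_pos hx0 hs0), Real.exp_log hx0]
    at hchain
  -- hchain : log (L (x * s)) - log (L x) ≤ δ * (log s + 1)
  have hLsx : 0 < L (x * s) := hLpos _ (mul_pos hx0 hs0)
  have hLx : 0 < L x := hLpos x hx0
  have h2 : L (x * s) ≤ Real.exp (Real.log (L x) + δ * (Real.log s + 1)) := by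
    rw [← Real.log_le_iff_le_exp hLsx]
    linarith
  calc L (s * x) = L (x * s) := by rw [mul_comm]
    _ ≤ Real.exp (Real.log (L x) + δ * (Real.log s + 1)) := h2
    _ = Real.exp δ * s ^ δ * L x := by
        have e1 : Real.exp δ * s ^ δ * L x
            = Real.exp (δ + Real.log s * δ + Real.log (L x)) := by
          rw [Real.rpow_def_of_pos hs0, Real.exp_add, Real.exp_add, Real.exp_log hLx]
        rw [e1]
        congr 1
        ring

/-- Karamata's theorem, tail half: if `L` is positive, measurable, slowly varying at
infinity and locally bounded on `[a, ∞)`, then for `r > 1` the tail integral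
`∫_x^∞ t^(-r) L(t) dt` is finite for all large `x`, and
`∫_x^∞ t^(-r) L(t) dt ~ x^(1-r) L(x) / (r-1)` as `x → ∞`. -/
theorem karamata_tail
    (a : ℝ) (ha : 0 < a) (L : ℝ → ℝ) (hLmeas : Measurable L)
    (hLpos : ∀ x, 0 < x → 0 < L x) (hSV : SlowlyVarying L)
    (hLbdd : ∀ b : ℝ, a ≤ b → ∃ M : ℝ, ∀ x ∈ Set.Icc a b, L x ≤ M)
    (r : ℝ) (hr : 1 < r) :
    (∀ᶠ x in atTop, IntegrableOn (fun t => t ^ (-r) * L t) (Set.Ioi x)) ∧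
    Tendsto (fun x => (∫ t in Set.Ioi x, t ^ (-r) * L t) / (x ^ (1 - r) * L x / (r - 1)))
      atTop (nhds 1) := by
  set δ : ℝ := (r - 1) / 2 with hδdef
  have hδ : 0 < δ := by rw [hδdef]; linarith
  obtain ⟨X, hXmax, hP⟩ := potter a L hLmeas hLpos hSV hδ
  have hX1 : (1:ℝ) ≤ X := (le_max_right a 1).trans hXmax
  have hX0 : 0 < X := lt_of_lt_of_le one_pos hX1
  set C : ℝ := Real.exp δ with hCdef
  have hC : 0 < C := Real.exp_pos δ
  have hδr : δ - r < -1 := by rw [hδdef]; linarith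
  -- integrability
  have hint : ∀ x, X ≤ x → IntegrableOn (fun t => t ^ (-r) * L t) (Set.Ioi x) := by
    intro x hx
    have hx0 : 0 < x := lt_of_lt_of_le hX0 hx
    have hmeasf : AEStronglyMeasurable (fun t : ℝ => t ^ (-r) * L t)
        (volume.restrict (Ioi x)) := by
      apply AEStronglyMeasurable.mul _ hLmeas.aestronglyMeasurable
      apply ContinuousOn.aestronglyMeasurable _ measurableSet_Ioi
      intro s hs
      exact (Real.continuousAt_rpow_const s (-r)
        (Or.inl (ne_of_gt (hx0.trans hs)))).continuousWithinAt
    apply Integrable.mono' (g := fun t => (C * L x * x ^ (-δ)) * t ^ (δ - r))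
      ((integrableOn_Ioi_rpow_of_lt hδr hx0).const_mul _) hmeasf
    filter_upwards [ae_restrict_mem measurableSet_Ioi] with t htx
    have ht0 : 0 < t := hx0.trans htx
    have hLt : L t ≤ C * (t / x) ^ δ * L x := by
      have := hP x hx (t / x) ((one_le_div hx0).2 htx.le)
      rwa [div_mul_cancel₀ _ hx0.ne'] at this
    rw [Real.norm_eq_abs, abs_of_nonneg (mul_nonneg (Real.rpow_nonneg ht0.le _)
      (hLpos t ht0).le)]
    have htr : (0:ℝ) < t ^ r := Real.rpow_pos_of_pos ht0 r
    have hxδ : (0:ℝ) < x ^ δ := Real.rpow_pos_of_pos hx0 δ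
    calc t ^ (-r) * L t ≤ t ^ (-r) * (C * (t / x) ^ δ * L x) :=
          mul_le_mul_of_nonneg_left hLt (Real.rpow_nonneg ht0.le _)
      _ = C * L x * x ^ (-δ) * t ^ (δ - r) := by
          rw [Real.div_rpow ht0.le hx0.le, Real.rpow_neg hx0.le, Real.rpow_sub ht0,
            Real.rpow_neg ht0.le]
          field_simp
  constructor
  · filter_upwards [eventually_ge_atTop X] with x hx using hint x hx
  -- the limit
  have hs_int : ∫ s in Ioi (1:ℝ), s ^ (-r) = 1 / (r - 1) := by
    rw [integral_Ioi_rpow_of_lt (by linarith) one_pos, Real.one_rpow,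
      show (-r + 1 : ℝ) = -(r - 1) by ring, neg_div_neg_eq]
  have hlim : Tendsto (fun x => ∫ s in Ioi (1:ℝ), s ^ (-r) * (L (s * x) / L x))
      atTop (nhds (1 / (r - 1))) := by
    rw [← hs_int]
    have hs_meas : AEStronglyMeasurable (fun s : ℝ => s ^ (-r))
        (volume.restrict (Ioi (1:ℝ))) := by
      apply ContinuousOn.aestronglyMeasurable _ measurableSet_Ioi
      intro s hs
      exact (Real.continuousAt_rpow_const s (-r)
        (Or.inl (ne_of_gt (one_pos.trans hs)))).continuousWithinAt
    apply tendsto_integral_filter_of_dominated_convergence (bound := fun s => C * s ^ (δ - r))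
    · filter_upwards with x
      exact hs_meas.mul ((hLmeas.comp (measurable_id.mul_const x)).div_const
        (L x)).aestronglyMeasurable
    · filter_upwards [eventually_ge_atTop X] with x hx
      filter_upwards [ae_restrict_mem measurableSet_Ioi] with s hs
      have hs1 : (1:ℝ) ≤ s := (le_of_lt hs)
      have hs0 : (0:ℝ) < s := one_pos.trans_le hs1
      have hx0 : 0 < x := lt_of_lt_of_le hX0 hx
      have hLx : 0 < L x := hLpos x hx0
      have hLsx : 0 < L (s * x) := hLpos _ (mul_pos hs0 hx0)
      rw [Real.norm_eq_abs, abs_of_nonneg (mul_nonneg (Real.rpow_nonneg hs0.le _)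
        (div_nonneg hLsx.le hLx.le))]
      have hdiv : L (s * x) / L x ≤ C * s ^ δ := by
        rw [div_le_iff₀ hLx]
        have := hP x hx s hs1
        linarith
      calc s ^ (-r) * (L (s * x) / L x) ≤ s ^ (-r) * (C * s ^ δ) :=
            mul_le_mul_of_nonneg_left hdiv (Real.rpow_nonneg hs0.le _)
        _ = C * s ^ (δ - r) := by
            rw [show δ - r = -r + δ by ring, Real.rpow_add hs0]
            ring
    · exact (integrableOn_Ioi_rpow_of_lt hδr one_pos).const_mul C
    · filter_upwards [ae_restrict_mem measurableSet_Ioi] with s hs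
      have hs0 : (0:ℝ) < s := one_pos.trans hs
      have := (hSV s hs0).const_mul (s ^ (-r))
      rwa [mul_one] at this
  -- eventual equality of the ratio with (r-1) * the normalized integral
  have heq : ∀ᶠ x in atTop,
      (∫ t in Set.Ioi x, t ^ (-r) * L t) / (x ^ (1 - r) * L x / (r - 1))
        = (r - 1) * ∫ s in Ioi (1:ℝ), s ^ (-r) * (L (s * x) / L x) := by
    filter_upwards [eventually_ge_atTop X] with x hx
    have hx0 : 0 < x := lt_of_lt_of_le hX0 hx
    have hLx : 0 < L x := hLpos x hx0
    have hsub := integral_comp_mul_right_Ioi (fun t => t ^ (-r) * L t) 1 hx0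
    rw [one_mul, smul_eq_mul] at hsub
    -- hsub : ∫ s in Ioi 1, (s*x)^(-r) * L (s*x) = x⁻¹ * ∫ t in Ioi x, t^(-r) * L t
    have hinner : EqOn (fun s : ℝ => (s * x) ^ (-r) * L (s * x))
        (fun s : ℝ => x ^ (-r) * (s ^ (-r) * L (s * x))) (Ioi 1) := by
      intro s hs
      have hs0 : (0:ℝ) < s := one_pos.trans hs
      simp only
      rw [Real.mul_rpow hs0.le hx0.le]
      ring
    rw [setIntegral_congr_fun measurableSet_Ioi hinner, integral_const_mul] at hsub
    have hdiv : ∫ s in Ioi (1:ℝ), s ^ (-r) * (L (s * x) / L x)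
        = (L x)⁻¹ * ∫ s in Ioi (1:ℝ), s ^ (-r) * L (s * x) := by
      rw [← integral_const_mul]
      apply setIntegral_congr_fun measurableSet_Ioi
      intro s _
      simp only
      field_simp
    have hmain : ∫ t in Set.Ioi x, t ^ (-r) * L t
        = x ^ (1 - r) * ∫ s in Ioi (1:ℝ), s ^ (-r) * L (s * x) := by
      have hxr : x ^ (1 - r) = x * x ^ (-r) := by
        rw [show (1:ℝ) - r = 1 + (-r) by ring, Real.rpow_add hx0, Real.rpow_one]
      rw [hxr]
      field_simp at hsub
      linarith [hsub]
    rw [hmain, hdiv]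
    have hpow : (0:ℝ) < x ^ (1 - r) := Real.rpow_pos_of_pos hx0 _
    field_simp
    ring_nf
    simp only [mul_comm x]
  have hfinal := (hlim.const_mul (r - 1)).congr' (EventuallyEq.symm heq)
  have h1 : (r - 1) * (1 / (r - 1)) = 1 := by
    rw [mul_one_div, div_self (by linarith : r - 1 ≠ 0)]
  rwa [h1] at hfinal
end

section
/- Let α ∈ (0,1), let L : (0,∞) → (0,∞) be slowly varying at infinity, let n be a Lévy measure on ℝ, and let q1 ≥ 0 be such that t^α L(t)^{-1} n((t,∞)) → q1/α as t → ∞. Then lim_{t→∞} t^{α−1} L(t)^{-1} ∫_{(1,t]} y n(dy) = q1/(1−α). -/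
open MeasureTheory Filter Set Real

open scoped ENNReal NNReal

lemma meas_bad_tendsto_zero (g : ℕ → ℝ → ℝ) (hg : ∀ m, Measurable (g m))
    (hpt : ∀ v : ℝ, Tendsto (fun m => g m v) atTop (nhds 0))
    {ε : ℝ} (hε : 0 < ε) :
    Tendsto (fun m => volume ({v : ℝ | ε ≤ |g m v|} ∩ Icc (-2:ℝ) 2)) atTop (nhds 0) := by
  have hSmeas : ∀ m, MeasurableSet ({v : ℝ | ε ≤ |g m v|} ∩ Icc (-2:ℝ) 2) := by
    intro m
    exact (measurableSet_le measurable_const (hg m).abs).inter measurableSet_Icc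
  have key : ∀ m, volume ({v : ℝ | ε ≤ |g m v|} ∩ Icc (-2:ℝ) 2)
      = ∫⁻ v, ({v : ℝ | ε ≤ |g m v|} ∩ Icc (-2:ℝ) 2).indicator (fun _ => (1:ℝ≥0∞)) v := by
    intro m
    rw [lintegral_indicator (hSmeas m), setLIntegral_one]
  simp_rw [key]
  have h0 : (0:ℝ≥0∞) = ∫⁻ _v : ℝ, (0:ℝ≥0∞) := by simp
  rw [h0]
  apply tendsto_lintegral_of_dominated_convergence
    (fun v => (Icc (-2:ℝ) 2).indicator (fun _ => (1:ℝ≥0∞)) v)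
  · intro m
    exact measurable_const.indicator (hSmeas m)
  · intro m
    filter_upwards with v
    by_cases h : v ∈ ({v : ℝ | ε ≤ |g m v|} ∩ Icc (-2:ℝ) 2)
    · rw [indicator_of_mem h, indicator_of_mem h.2]
    · rw [indicator_of_notMem h]; exact zero_le
  · rw [lintegral_indicator measurableSet_Icc, setLIntegral_one]
    simp
  · filter_upwards with v
    have : ∀ᶠ m in atTop, ({v : ℝ | ε ≤ |g m v|} ∩ Icc (-2:ℝ) 2).indicator
        (fun _ => (1:ℝ≥0∞)) v = 0 := by
      have := (hpt v).abs
      rw [abs_zero] at this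
      filter_upwards [this.eventually_lt_const hε] with m hm
      apply indicator_of_notMem
      intro hmem
      exact absurd hm (not_lt.2 hmem.1)
    exact Tendsto.congr' (by filter_upwards [this] with m hm; exact hm.symm) tendsto_const_nhds

lemma uct_s10 (h : ℝ → ℝ) (hmeas : Measurable h)
    (hlim : ∀ v : ℝ, Tendsto (fun x => h (x + v) - h x) atTop (nhds 0))
    {ε : ℝ} (hε : 0 < ε) :
    ∃ X : ℝ, ∀ x, X ≤ x → ∀ u ∈ Icc (0:ℝ) 1, |h (x + u) - h x| ≤ ε := by
  by_contra hc
  push_neg at hc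
  choose x hx u hu hbad using hc
  set X : ℕ → ℝ := fun m => x (m : ℝ) with hX
  have hXtop : Tendsto X atTop atTop := by
    exact tendsto_atTop_mono (fun m : ℕ => hx (m:ℝ)) tendsto_natCast_atTop_atTop
  have hYtop : Tendsto (fun m => X m + u (m : ℝ)) atTop atTop := by
    apply tendsto_atTop_mono (fun m : ℕ => ?_) hXtop
    have := (hu (m : ℝ)).1
    linarith
  -- the two families of "bad" sets
  set A : ℕ → Set ℝ := fun m => {v : ℝ | ε/2 ≤ |h (X m + v) - h (X m)|} ∩ Icc (-2:ℝ) 2 with hA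
  set C : ℕ → Set ℝ := fun m =>
    {v : ℝ | ε/2 ≤ |h (X m + u (m:ℝ) + v) - h (X m + u (m:ℝ))|} ∩ Icc (-2:ℝ) 2 with hC
  have hAvol : Tendsto (fun m => volume (A m)) atTop (nhds 0) := by
    apply meas_bad_tendsto_zero (fun m v => h (X m + v) - h (X m))
    · intro m; exact (hmeas.comp (measurable_const.add measurable_id)).sub measurable_const
    · intro v; exact (hlim v).comp hXtop
    · linarith
  have hCvol : Tendsto (fun m => volume (C m)) atTop (nhds 0) := by
    apply meas_bad_tendsto_zero (fun m v => h (X m + u (m:ℝ) + v) - h (X m + u (m:ℝ)))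
    · intro m; exact (hmeas.comp (measurable_const.add measurable_id)).sub measurable_const
    · intro v; exact (hlim v).comp hYtop
    · linarith
  -- pick m with both volumes < 1/4
  have hev : ∀ᶠ m in atTop, volume (A m) < 1/4 ∧ volume (C m) < 1/4 := by
    have h4 : (0:ℝ≥0∞) < 1/4 := by norm_num
    filter_upwards [hAvol.eventually_lt_const h4, hCvol.eventually_lt_const h4] with m h1 h2
    exact ⟨h1, h2⟩
  obtain ⟨m, hm⟩ := hev.exists
  set um := u (m:ℝ) with hum
  -- the translated bad set
  set D : Set ℝ := (fun v => v - um) ⁻¹' (C m) with hD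
  have hDvol : volume D = volume (C m) := by
    rw [hD]
    have : (fun v : ℝ => v - um) = (fun v : ℝ => v + (-um)) := by funext v; ring
    rw [this]
    exact measure_preimage_add_right volume (-um) (C m)
  -- find a good point in [um, um+1]
  have hsub : Icc um (um + 1) ⊆ (A m ∪ D) ∪ (Icc um (um+1) \ (A m ∪ D)) := by
    intro v hv
    by_cases hv2 : v ∈ A m ∪ D
    · exact Or.inl hv2
    · exact Or.inr ⟨hv, hv2⟩
  have hvolIcc : volume (Icc um (um+1)) = 1 := by
    rw [Real.volume_Icc]; norm_num
  have hne : (Icc um (um+1) \ (A m ∪ D)).Nonempty := by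
    by_contra hemp
    rw [not_nonempty_iff_eq_empty] at hemp
    have h1 : volume (Icc um (um+1)) ≤ volume (A m ∪ D) + volume (Icc um (um+1) \ (A m ∪ D)) :=
      le_trans (measure_mono hsub) (measure_union_le _ _)
    rw [hemp, measure_empty, add_zero, hvolIcc] at h1
    have h2 : volume (A m ∪ D) ≤ volume (A m) + volume D := measure_union_le _ _
    rw [hDvol] at h2
    have hlt : (1:ℝ≥0∞) ≤ 1/4 + 1/4 := le_trans h1 (le_trans h2 (add_le_add hm.1.le hm.2.le))
    have : (1/4 : ℝ≥0∞) + 1/4 < 1 := by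
      rw [ENNReal.div_add_div_same, ENNReal.div_lt_iff (by norm_num) (by norm_num)]
      norm_num
    exact absurd hlt (not_le.2 this)
  obtain ⟨v, hvI, hvn⟩ := hne
  have hum01 := hu (m:ℝ)
  rw [← hum] at hum01
  have hv02 : v ∈ Icc (-2:ℝ) 2 := by
    constructor <;> [skip; skip] <;>
      · have := hvI.1; have := hvI.2; have := hum01.1; have := hum01.2; linarith
  have hvd : v - um ∈ Icc (-2:ℝ) 2 := by
    constructor <;>
      · have := hvI.1; have := hvI.2; linarith
  have hnA : ¬ (ε/2 ≤ |h (X m + v) - h (X m)|) := by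
    intro habs
    exact hvn (Or.inl ⟨habs, hv02⟩)
  have hnC : ¬ (ε/2 ≤ |h (X m + um + (v - um)) - h (X m + um)|) := by
    intro habs
    exact hvn (Or.inr ⟨habs, hvd⟩)
  push_neg at hnA hnC
  have heq : X m + um + (v - um) = X m + v := by ring
  rw [heq] at hnC
  have := hbad (m : ℝ)
  rw [← hum] at this
  have : ε < |h (X m + um) - h (X m)| := this
  have htri : |h (X m + um) - h (X m)| ≤ |h (X m + um) - h (X m + v)| + |h (X m + v) - h (X m)| :=
    abs_sub_le _ _ _
  rw [abs_sub_comm (h (X m + um)) (h (X m + v))] at htri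
  linarith

lemma potter_s10 (L : ℝ → ℝ) (hLmeas : Measurable L) (hLpos : ∀ x, 0 < x → 0 < L x)
    (hSV : ∀ c : ℝ, 0 < c → Tendsto (fun x => L (c * x) / L x) atTop (nhds 1))
    {ε : ℝ} (hε : 0 < ε) :
    ∃ C : ℝ, 1 ≤ C ∧ ∃ T : ℝ, 1 ≤ T ∧ ∀ s t : ℝ, T ≤ s → s ≤ t →
      L t ≤ C * (t/s) ^ ε * L s ∧ L s ≤ C * (t/s) ^ ε * L t := by
  set h : ℝ → ℝ := fun x => Real.log (L (Real.exp x)) with hh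
  have hmeas : Measurable h := Real.measurable_log.comp (hLmeas.comp Real.measurable_exp)
  have hlim : ∀ v : ℝ, Tendsto (fun x => h (x + v) - h x) atTop (nhds 0) := by
    intro v
    have h1 : Tendsto (fun x : ℝ => L (Real.exp v * Real.exp x) / L (Real.exp x)) atTop
        (nhds 1) := (hSV (Real.exp v) (Real.exp_pos v)).comp Real.tendsto_exp_atTop
    have h2 : Tendsto (fun x : ℝ => Real.log (L (Real.exp v * Real.exp x) / L (Real.exp x)))
        atTop (nhds 0) := by
      have := (Real.continuousAt_log (one_ne_zero)).tendsto.comp h1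
      rwa [Real.log_one] at this
    apply h2.congr
    intro x
    rw [Real.log_div (ne_of_gt (hLpos _ (by positivity))) (ne_of_gt (hLpos _ (Real.exp_pos x)))]
    rw [hh]
    simp only [Real.exp_add]
    ring_nf
  obtain ⟨X, hX⟩ := uct_s10 h hmeas hlim hε
  -- iterate: for r ≥ 0, |h (x+r) - h x| ≤ (⌈r⌉) ε ≤ (r+1) ε
  have key : ∀ k : ℕ, ∀ x r : ℝ, X ≤ x → 0 ≤ r → r ≤ k → |h (x + r) - h x| ≤ k * ε := by
    intro k
    induction k with
    | zero =>
      intro x r hx hr0 hrk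
      norm_num at hrk
      have : r = 0 := le_antisymm hrk hr0
      simp [this]
    | succ k ih =>
      intro x r hx hr0 hrk
      by_cases hr1 : r ≤ 1
      · have := hX x hx r ⟨hr0, hr1⟩
        have hk1 : ε ≤ (k+1) * ε := by nlinarith [hε.le]
        push_cast
        linarith
      · push_neg at hr1
        have h1 : |h ((x + (r-1)) + 1) - h (x + (r-1))| ≤ ε := by
          apply hX (x + (r-1)) (by linarith) 1 ⟨zero_le_one, le_refl 1⟩
        have h2 : |h (x + (r-1)) - h x| ≤ k * ε := by
          apply ih x (r-1) hx (by linarith)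
          push_cast at hrk ⊢
          linarith
        have heq : (x + (r-1)) + 1 = x + r := by ring
        rw [heq] at h1
        push_cast
        calc |h (x+r) - h x| ≤ |h (x+r) - h (x + (r-1))| + |h (x + (r-1)) - h x| :=
              abs_sub_le _ _ _
          _ ≤ ε + k * ε := add_le_add h1 h2
          _ = (k+1) * ε := by ring
  have key2 : ∀ x r : ℝ, X ≤ x → 0 ≤ r → |h (x + r) - h x| ≤ (r + 1) * ε := by
    intro x r hx hr0
    have h1 := key ⌈r⌉₊ x r hx hr0 (Nat.le_ceil r)
    have h2 : (⌈r⌉₊ : ℝ) ≤ r + 1 := (Nat.ceil_lt_add_one hr0).le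
    have : (⌈r⌉₊ : ℝ) * ε ≤ (r+1) * ε := by nlinarith [hε.le]
    linarith
  refine ⟨Real.exp ε, Real.one_le_exp hε.le, max 1 (Real.exp X), le_max_left _ _, ?_⟩
  intro s t hTs hst
  have hs0 : (0:ℝ) < s := lt_of_lt_of_le one_pos (le_trans (le_max_left _ _) hTs)
  have ht0 : (0:ℝ) < t := lt_of_lt_of_le hs0 hst
  have hXs : X ≤ Real.log s := by
    have : Real.exp X ≤ s := le_trans (le_max_right _ _) hTs
    rw [← Real.log_exp X]
    exact Real.log_le_log (Real.exp_pos X) this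
  set r : ℝ := Real.log t - Real.log s with hr
  have hr0 : 0 ≤ r := by
    rw [hr]
    have := Real.log_le_log hs0 hst
    linarith
  have hkey := key2 (Real.log s) r hXs hr0
  have hexp : Real.log s + r = Real.log t := by rw [hr]; ring
  rw [hexp] at hkey
  have hhs : h (Real.log s) = Real.log (L s) := by rw [hh]; simp [Real.exp_log hs0]
  have hht : h (Real.log t) = Real.log (L t) := by rw [hh]; simp [Real.exp_log ht0]
  rw [hhs, hht] at hkey
  have hrlog : r = Real.log (t / s) := by rw [hr, Real.log_div (ne_of_gt ht0) (ne_of_gt hs0)]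
  have hts1 : (1:ℝ) ≤ t / s := (one_le_div hs0).2 hst
  have hLs := hLpos s hs0
  have hLt := hLpos t ht0
  have hpow : (t/s) ^ ε = Real.exp (ε * r) := by
    rw [hrlog, Real.rpow_def_of_pos (by linarith), mul_comm]
  have habs := abs_le.1 hkey
  constructor
  · have h1 : Real.log (L t) - Real.log (L s) ≤ (r+1) * ε := habs.2
    have h2 : L t / L s = Real.exp (Real.log (L t) - Real.log (L s)) := by
      rw [Real.exp_sub, Real.exp_log hLt, Real.exp_log hLs]
    have h3 : L t / L s ≤ Real.exp ((r+1)*ε) := by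
      rw [h2]; exact Real.exp_le_exp.2 h1
    have h4 : Real.exp ((r+1)*ε) = Real.exp ε * (t/s) ^ ε := by
      rw [hpow, ← Real.exp_add]; ring_nf
    rw [h4] at h3
    calc L t = (L t / L s) * L s := by field_simp
      _ ≤ (Real.exp ε * (t/s) ^ ε) * L s := by
          apply mul_le_mul_of_nonneg_right h3 hLs.le
  · have h1 : -((r+1) * ε) ≤ Real.log (L t) - Real.log (L s) := habs.1
    have h2 : L s / L t = Real.exp (Real.log (L s) - Real.log (L t)) := by
      rw [Real.exp_sub, Real.exp_log hLt, Real.exp_log hLs]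
    have h3 : L s / L t ≤ Real.exp ((r+1)*ε) := by
      rw [h2]; apply Real.exp_le_exp.2; linarith
    have h4 : Real.exp ((r+1)*ε) = Real.exp ε * (t/s) ^ ε := by
      rw [hpow, ← Real.exp_add]; ring_nf
    rw [h4] at h3
    calc L s = (L s / L t) * L t := by field_simp
      _ ≤ (Real.exp ε * (t/s) ^ ε) * L t := by
          apply mul_le_mul_of_nonneg_right h3 hLt.le

lemma rpow_div_SV_tendsto_zero (L : ℝ → ℝ) (hLmeas : Measurable L)
    (hLpos : ∀ x, 0 < x → 0 < L x)
    (hSV : ∀ c : ℝ, 0 < c → Tendsto (fun x => L (c * x) / L x) atTop (nhds 1))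
    {β : ℝ} (hβ : β < 0) :
    Tendsto (fun t => t ^ β / L t) atTop (nhds 0) := by
  have hε : (0:ℝ) < -β/2 := by linarith
  obtain ⟨C, hC1, T, hT1, hpot⟩ := potter_s10 L hLmeas hLpos hSV hε
  set ε := -β/2 with hεdef
  have hT0 : (0:ℝ) < T := lt_of_lt_of_le one_pos hT1
  have hLT := hLpos T hT0
  have hbound : ∀ᶠ t in atTop, t ^ β / L t ≤ (C / (T ^ ε * L T)) * t ^ (β + ε) := by
    filter_upwards [eventually_ge_atTop T] with t ht
    have ht0 : (0:ℝ) < t := lt_of_lt_of_le hT0 ht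
    have hLt := hLpos t ht0
    have h1 := (hpot T t (le_refl T) ht).2
    -- L T ≤ C * (t/T)^ε * L t
    have hts : (0:ℝ) < (t/T) ^ ε := Real.rpow_pos_of_pos (by positivity) ε
    have h2 : 1 / L t ≤ C * (t/T) ^ ε / L T := by
      rw [div_le_div_iff₀ hLt hLT]
      calc 1 * L T = L T := one_mul _
        _ ≤ C * (t/T)^ε * L t := h1
    have h3 : t ^ β / L t ≤ t ^ β * (C * (t/T) ^ ε / L T) := by
      have htb : (0:ℝ) ≤ t ^ β := (Real.rpow_pos_of_pos ht0 β).le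
      calc t ^ β / L t = t ^ β * (1 / L t) := by ring
        _ ≤ t ^ β * (C * (t/T)^ε / L T) := mul_le_mul_of_nonneg_left h2 htb
    have habc : ∀ a b c d : ℝ, c ≠ 0 → d ≠ 0 →
        a * (C * (b / c) / d) = (C / (c * d)) * (a * b) := by
      intro a b c d hc hd
      field_simp
    have hTε : (0:ℝ) < T ^ ε := Real.rpow_pos_of_pos hT0 ε
    have h4 : t ^ β * (C * (t/T) ^ ε / L T) = (C / (T ^ ε * L T)) * t ^ (β + ε) := by
      rw [Real.div_rpow ht0.le hT0.le, Real.rpow_add ht0]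
      exact habc _ _ _ _ hTε.ne' hLT.ne'
    rw [h4] at h3
    exact h3
  have hnonneg : ∀ᶠ t in atTop, 0 ≤ t ^ β / L t := by
    filter_upwards [eventually_gt_atTop 0] with t ht
    exact div_nonneg (Real.rpow_pos_of_pos ht β).le (hLpos t ht).le
  have hg : Tendsto (fun t => (C / (T ^ ε * L T)) * t ^ (β + ε)) atTop (nhds 0) := by
    have : Tendsto (fun t : ℝ => t ^ (β + ε)) atTop (nhds 0) := by
      have h5 := tendsto_rpow_neg_atTop (y := -(β + ε)) (by rw [hεdef]; linarith)
      simpa using h5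
    have := this.const_mul (C / (T ^ ε * L T))
    rwa [mul_zero] at this
  exact squeeze_zero' hnonneg hbound hg

lemma tail_meas (n : Measure ℝ) {t : ℝ} :
    Measurable (fun s : ℝ => n (Ioc (max 1 s) t)) := by
  apply Antitone.measurable
  intro a b hab
  exact measure_mono (Ioc_subset_Ioc_left (max_le_max (le_refl 1) hab))

lemma key_identity (n : Measure ℝ) (hfin : n (Ioi (1:ℝ)) ≠ ⊤) {t : ℝ} (ht : 1 ≤ t) :
    ∫ y in Ioc (1:ℝ) t, y ∂n
      = (n (Ioc (1:ℝ) t)).toReal + ∫ s in Ioc (1:ℝ) t, (n (Ioc s t)).toReal := by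
  have hIocIoi : ∀ s : ℝ, 1 ≤ s → n (Ioc s t) ≤ n (Ioi 1) :=
    fun s hs => measure_mono (fun y hy => lt_of_le_of_lt hs hy.1)
  -- layer cake
  have hnn : 0 ≤ᵐ[n.restrict (Ioc (1:ℝ) t)] (fun y : ℝ => y) := by
    filter_upwards [ae_restrict_mem measurableSet_Ioc] with y hy
    simp only [Pi.zero_apply]
    linarith [hy.1]
  have hlc := lintegral_eq_lintegral_meas_lt (n.restrict (Ioc (1:ℝ) t)) hnn
    aemeasurable_id
  have hset : ∀ s : ℝ, (n.restrict (Ioc (1:ℝ) t)) {a : ℝ | s < a} = n (Ioc (max 1 s) t) := by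
    intro s
    rw [Measure.restrict_apply' measurableSet_Ioc]
    congr 1
    rw [show {a : ℝ | s < a} = Ioi s from rfl, inter_comm, Ioc_inter_Ioi]
  simp_rw [hset] at hlc
  -- split the s-integral domain
  have hsplit0 : Ioc (0:ℝ) t ∪ Ioi t = Ioi 0 := Ioc_union_Ioi_eq_Ioi (by linarith)
  have hzero : ∫⁻ s in Ioi t, n (Ioc (max 1 s) t) ∂volume = 0 := by
    have hcong : ∀ s ∈ Ioi t, n (Ioc (max 1 s) t) = (0:ℝ≥0∞) := by
      intro s hs
      have : Ioc (max 1 s) t = ∅ := by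
        apply Ioc_eq_empty
        intro hlt
        exact absurd (lt_of_le_of_lt (le_max_right 1 s) hlt) (not_lt.2 hs.le)
      rw [this, measure_empty]
    rw [setLIntegral_congr_fun measurableSet_Ioi hcong,
      lintegral_zero]
  have hIoi0 : ∫⁻ s in Ioi (0:ℝ), n (Ioc (max 1 s) t) ∂volume
      = ∫⁻ s in Ioc (0:ℝ) t, n (Ioc (max 1 s) t) ∂volume := by
    rw [← hsplit0, lintegral_union measurableSet_Ioi
      (Ioc_disjoint_Ioi (le_refl t)), hzero, add_zero]
  rw [hIoi0] at hlc
  -- split Ioc 0 t into Ioc 0 1 and Ioc 1 t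
  have hsplit1 : Ioc (0:ℝ) 1 ∪ Ioc 1 t = Ioc 0 t := Ioc_union_Ioc_eq_Ioc zero_le_one ht
  have h01 : ∫⁻ s in Ioc (0:ℝ) 1, n (Ioc (max 1 s) t) ∂volume = n (Ioc (1:ℝ) t) := by
    have hcong : ∀ s ∈ Ioc (0:ℝ) 1, n (Ioc (max 1 s) t) = n (Ioc (1:ℝ) t) := by
      intro s hs
      rw [max_eq_left hs.2]
    rw [setLIntegral_congr_fun measurableSet_Ioc hcong,
      setLIntegral_const, Real.volume_Ioc]
    norm_num
  have h1t : ∫⁻ s in Ioc (0:ℝ) t, n (Ioc (max 1 s) t) ∂volume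
      = n (Ioc (1:ℝ) t) + ∫⁻ s in Ioc (1:ℝ) t, n (Ioc (max 1 s) t) ∂volume := by
    rw [← hsplit1, lintegral_union measurableSet_Ioc
      (Ioc_disjoint_Ioc_of_le le_rfl), h01]
  rw [h1t] at hlc
  -- convert to Bochner integrals
  have hfinIoc : n (Ioc (1:ℝ) t) ≠ ⊤ :=
    fun habs => hfin (eq_top_mono (measure_mono Ioc_subset_Ioi_self) habs)
  have hfin2 : ∫⁻ s in Ioc (1:ℝ) t, n (Ioc (max 1 s) t) ∂volume ≠ ⊤ := by
    apply ne_of_lt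
    calc ∫⁻ s in Ioc (1:ℝ) t, n (Ioc (max 1 s) t) ∂volume
        ≤ ∫⁻ _s in Ioc (1:ℝ) t, n (Ioi 1) ∂volume := by
          apply setLIntegral_mono' measurableSet_Ioc
          intro s hs
          exact measure_mono (fun y hy => lt_of_le_of_lt (le_max_left 1 s) hy.1)
      _ = n (Ioi 1) * volume (Ioc (1:ℝ) t) := by rw [setLIntegral_const]
      _ < ⊤ := ENNReal.mul_lt_top (lt_top_iff_ne_top.2 hfin)
          (by rw [Real.volume_Ioc]; exact ENNReal.ofReal_lt_top)
  have hL : ∫ y in Ioc (1:ℝ) t, y ∂n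
      = (∫⁻ y in Ioc (1:ℝ) t, ENNReal.ofReal y ∂n).toReal := by
    rw [integral_eq_lintegral_of_nonneg_ae hnn aestronglyMeasurable_id]
  have hR : (∫⁻ s in Ioc (1:ℝ) t, n (Ioc (max 1 s) t) ∂volume).toReal
      = ∫ s in Ioc (1:ℝ) t, (n (Ioc (max 1 s) t)).toReal ∂volume := by
    rw [← integral_toReal ((tail_meas n).aemeasurable.restrict)]
    filter_upwards [ae_restrict_mem measurableSet_Ioc] with s hs
    exact lt_of_le_of_lt (hIocIoi (max 1 s) (le_max_left 1 s)) (lt_top_iff_ne_top.2 hfin)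
  have hfinal : ∫ s in Ioc (1:ℝ) t, (n (Ioc (max 1 s) t)).toReal ∂volume
      = ∫ s in Ioc (1:ℝ) t, (n (Ioc s t)).toReal ∂volume := by
    apply setIntegral_congr_fun measurableSet_Ioc
    intro s hs
    have : max 1 s = s := max_eq_right hs.1.le
    simp only [this]
  rw [hL, hlc, ENNReal.toReal_add hfinIoc hfin2, hR, hfinal]

lemma limB (α : ℝ) (hα0 : 0 < α) (hα1 : α < 1)
    (L : ℝ → ℝ) (hLmeas : Measurable L) (hLpos : ∀ x, 0 < x → 0 < L x)
    (hSV : ∀ c : ℝ, 0 < c → Tendsto (fun x => L (c * x) / L x) atTop (nhds 1))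
    (f : ℝ → ℝ) (hfmeas : Measurable f) (hf0 : ∀ s, 0 ≤ f s)
    (hfb : ∀ s, 1 ≤ s → f s ≤ f 1)
    (q1 : ℝ) (hq1 : 0 ≤ q1)
    (htail : Tendsto (fun t => t ^ α / L t * f t) atTop (nhds (q1 / α))) :
    Tendsto (fun t => t ^ (α - 1) / L t * ∫ s in Ioc (1:ℝ) t, f s) atTop
      (nhds (q1 / (α * (1 - α)))) := by
  have hε : (0:ℝ) < (1-α)/2 := by linarith
  set ε := (1-α)/2 with hεdef
  obtain ⟨C, hC1, T, hT1, hpot⟩ := potter_s10 L hLmeas hLpos hSV hε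
  set M : ℝ := q1/α + 1 with hMdef
  have hq1α : 0 ≤ q1 / α := div_nonneg hq1 hα0.le
  have hM0 : 0 < M := by rw [hMdef]; linarith
  have hMev : ∀ᶠ t in atTop, t ^ α / L t * f t < M :=
    htail.eventually_lt_const (by rw [hMdef]; linarith)
  obtain ⟨T₂, hT₂⟩ := eventually_atTop.1 hMev
  set T' : ℝ := max (max T T₂) 1 with hT'def
  have hT'1 : (1:ℝ) ≤ T' := le_max_right _ _
  have hT'T : T ≤ T' := le_trans (le_max_left _ _) (le_max_left _ _)
  have hT'T₂ : T₂ ≤ T' := le_trans (le_max_right _ _) (le_max_left _ _)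
  have hT'0 : (0:ℝ) < T' := lt_of_lt_of_le one_pos hT'1
  have hMbd : ∀ s, T' ≤ s → f s ≤ M * L s / s ^ α := by
    intro s hs
    have h1 := hT₂ s (le_trans hT'T₂ hs)
    have hs0 : (0:ℝ) < s := lt_of_lt_of_le hT'0 hs
    have hsα : (0:ℝ) < s ^ α := Real.rpow_pos_of_pos hs0 α
    have hLs := hLpos s hs0
    rw [div_mul_eq_mul_div, div_lt_iff₀ hLs] at h1
    rw [le_div_iff₀ hsα]
    nlinarith
  have hfInt : ∀ a b : ℝ, 1 ≤ a → IntegrableOn f (Ioc a b) volume := by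
    intro a b ha
    apply Measure.integrableOn_of_bounded (M := f 1) measure_Ioc_lt_top.ne
      hfmeas.aestronglyMeasurable
    filter_upwards [ae_restrict_mem measurableSet_Ioc] with x hx
    rw [Real.norm_eq_abs, abs_of_nonneg (hf0 x)]
    exact hfb x (le_trans ha hx.1.le)
  set F : ℝ → ℝ → ℝ :=
    fun t u => (Ioc (T'/t) 1).indicator (fun u => t ^ α / L t * f (t*u)) u with hFdef
  set Glim : ℝ → ℝ :=
    fun u => (Ioc (0:ℝ) 1).indicator (fun u => (q1/α) * u ^ (-α)) u with hGdef
  set bound : ℝ → ℝ :=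
    fun u => (Ioc (0:ℝ) 1).indicator (fun u => (C*M) * u ^ (-(α+ε))) u with hbdef
  have hbound_int : Integrable bound volume := by
    have h1 : IntegrableOn (fun u : ℝ => u ^ (-(α+ε))) (Ioc 0 1) volume := by
      have h2 := intervalIntegral.intervalIntegrable_rpow' (a := (0:ℝ)) (b := 1)
        (r := -(α+ε)) (by rw [hεdef]; linarith)
      rwa [intervalIntegrable_iff_integrableOn_Ioc_of_le zero_le_one] at h2
    have h3 : IntegrableOn (fun u : ℝ => (C*M) * u ^ (-(α+ε))) (Ioc 0 1) volume :=
      h1.const_mul (C*M)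
    exact h3.integrable_indicator measurableSet_Ioc
  have hFmeas : ∀ t : ℝ, AEStronglyMeasurable (F t) volume := by
    intro t
    exact (((hfmeas.comp (measurable_const_mul t)).const_mul _).indicator
      measurableSet_Ioc).aestronglyMeasurable
  have h_bound : ∀ᶠ t in atTop, ∀ᵐ u : ℝ ∂volume, ‖F t u‖ ≤ bound u := by
    filter_upwards [eventually_ge_atTop (max T' 1)] with t ht
    apply ae_of_all
    intro u
    have htT' : T' ≤ t := le_trans (le_max_left _ _) ht
    have ht0 : (0:ℝ) < t := lt_of_lt_of_le hT'0 htT'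
    have hLt := hLpos t ht0
    have htα : (0:ℝ) < t ^ α := Real.rpow_pos_of_pos ht0 α
    by_cases hu : u ∈ Ioc (T'/t) 1
    · have hu0 : 0 < u := lt_trans (div_pos hT'0 ht0) hu.1
      have htu0 : 0 < t * u := mul_pos ht0 hu0
      have htu : T' ≤ t * u := by
        have h1 := (div_lt_iff₀ ht0).1 hu.1
        rw [mul_comm]
        linarith
      have htut : t * u ≤ t := mul_le_of_le_one_right ht0.le hu.2
      have hLtu := hLpos _ htu0
      have hfb1 := hMbd (t*u) htu
      have hpot1 := (hpot (t*u) t (le_trans hT'T htu) htut).2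
      have hc0 : 0 ≤ t ^ α / L t := (div_pos htα hLt).le
      have htuα : (0:ℝ) < (t*u) ^ α := Real.rpow_pos_of_pos htu0 α
      have huα : (0:ℝ) < u ^ α := Real.rpow_pos_of_pos hu0 α
      have huε : (0:ℝ) < u ^ ε := Real.rpow_pos_of_pos hu0 ε
      have hFval : F t u = t ^ α / L t * f (t*u) := indicator_of_mem hu _
      have hbval : bound u = (C*M) * u ^ (-(α+ε)) :=
        indicator_of_mem (show u ∈ Ioc (0:ℝ) 1 from ⟨hu0, hu.2⟩) _
      have step1 : f (t*u) ≤ M * (C * (t/(t*u))^ε * L t) / (t*u)^α := by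
        apply le_trans hfb1
        rw [div_le_div_iff₀ htuα htuα]
        apply mul_le_mul_of_nonneg_right _ htuα.le
        exact mul_le_mul_of_nonneg_left hpot1 hM0.le
      have e3 : (t/(t*u))^ε = (u^ε)⁻¹ := by
        rw [show t/(t*u) = u⁻¹ from by field_simp, Real.inv_rpow hu0.le]
      have e1 : u ^ (-(α+ε)) = (u^α)⁻¹ * (u^ε)⁻¹ := by
        rw [Real.rpow_neg hu0.le, Real.rpow_add hu0, mul_inv]
      have e2 : (t*u)^α = t^α * u^α := Real.mul_rpow ht0.le hu0.le
      have hgoal_eq : t ^ α / L t * (M * (C * (t/(t*u))^ε * L t) / (t*u)^α)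
          = (C*M) * u^(-(α+ε)) := by
        rw [e3, e1, e2]
        field_simp
      rw [hFval, hbval, Real.norm_eq_abs,
        abs_of_nonneg (mul_nonneg hc0 (hf0 _))]
      rw [← hgoal_eq]
      exact mul_le_mul_of_nonneg_left step1 hc0
    · rw [show F t u = 0 from indicator_of_notMem hu _, norm_zero]
      by_cases hu2 : u ∈ Ioc (0:ℝ) 1
      · rw [show bound u = (C*M) * u ^ (-(α+ε)) from indicator_of_mem hu2 _]
        have : (0:ℝ) < u ^ (-(α+ε)) := Real.rpow_pos_of_pos hu2.1 _
        positivity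
      · rw [show bound u = 0 from indicator_of_notMem hu2 _]
  have h_lim : ∀ᵐ u : ℝ ∂volume, Tendsto (fun t => F t u) atTop (nhds (Glim u)) := by
    apply ae_of_all
    intro u
    by_cases hu : u ∈ Ioc (0:ℝ) 1
    · have hu0 : 0 < u := hu.1
      have hGval : Glim u = (q1/α) * u ^ (-α) := indicator_of_mem hu _
      have hlim1 : Tendsto (fun t => ((t*u) ^ α / L (t*u) * f (t*u)) * (L (u*t) / L t)
          * u ^ (-α)) atTop (nhds ((q1/α) * 1 * u ^ (-α))) :=
        ((htail.comp (tendsto_id.atTop_mul_const hu0)).mul (hSV u hu0)).mul_const _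
      rw [mul_one] at hlim1
      rw [hGval]
      apply hlim1.congr'
      filter_upwards [eventually_gt_atTop (T'/u), eventually_ge_atTop 1] with t h1 h2
      have ht0 : (0:ℝ) < t := lt_of_lt_of_le one_pos h2
      have hmem : u ∈ Ioc (T'/t) 1 := by
        constructor
        · rw [div_lt_iff₀ ht0]
          have h1' := (div_lt_iff₀ hu0).1 h1
          have hcomm : t * u = u * t := mul_comm t u
          linarith
        · exact hu.2
      have hFval : F t u = t ^ α / L t * f (t*u) := indicator_of_mem hmem _
      rw [hFval]
      have hLt := hLpos t ht0
      have hLtu := hLpos (t*u) (mul_pos ht0 hu0)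
      have huα : (0:ℝ) < u ^ α := Real.rpow_pos_of_pos hu0 α
      rw [mul_comm u t, Real.mul_rpow ht0.le hu0.le, Real.rpow_neg hu0.le]
      field_simp
    · have hGval : Glim u = 0 := indicator_of_notMem hu _
      rw [hGval]
      apply Tendsto.congr' _ tendsto_const_nhds
      filter_upwards [eventually_gt_atTop 0] with t ht0
      have : u ∉ Ioc (T'/t) 1 := by
        intro hmem
        exact hu ⟨lt_trans (div_pos hT'0 ht0) hmem.1, hmem.2⟩
      exact (indicator_of_notMem this _).symm
  have hDCT : Tendsto (fun t => ∫ u, F t u) atTop (nhds (∫ u, Glim u)) :=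
    tendsto_integral_filter_of_dominated_convergence bound
      (Filter.Eventually.of_forall hFmeas) h_bound hbound_int h_lim
  have hGval : ∫ u, Glim u = q1 / (α * (1-α)) := by
    rw [hGdef, integral_indicator measurableSet_Ioc,
      ← intervalIntegral.integral_of_le zero_le_one,
      intervalIntegral.integral_const_mul, integral_rpow (Or.inl (by linarith)),
      Real.one_rpow, Real.zero_rpow (by linarith : -α + 1 ≠ 0)]
    have hαne : (α:ℝ) ≠ 0 := hα0.ne'
    have h1α : (-α + 1 : ℝ) ≠ 0 := by linarith
    rw [sub_zero, div_mul_div_comm, mul_one]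
    congr 1
    ring
  rw [hGval] at hDCT
  have hrepr : ∀ᶠ t in atTop, t ^ (α-1) / L t * ∫ s in Ioc T' t, f s = ∫ u, F t u := by
    filter_upwards [eventually_ge_atTop T'] with t ht
    have ht0 : (0:ℝ) < t := lt_of_lt_of_le hT'0 ht
    have hT't1 : T'/t ≤ 1 := by rw [div_le_one ht0]; exact ht
    have e0 : ∫ s in Ioc T' t, f s = ∫ s in T'..t, f s :=
      (intervalIntegral.integral_of_le ht).symm
    have e1 : (∫ u in (T'/t)..1, f (t*u)) = t⁻¹ • ∫ x in (t*(T'/t))..(t*1), f x :=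
      intervalIntegral.integral_comp_mul_left f ht0.ne'
    rw [show t * (T'/t) = T' from by field_simp, mul_one] at e1
    have e2 : ∫ s in T'..t, f s = t * ∫ u in (T'/t)..1, f (t*u) := by
      rw [e1, smul_eq_mul, ← mul_assoc, mul_inv_cancel₀ ht0.ne', one_mul]
    have e4 : ∫ u, F t u = ∫ u in (T'/t)..1, (t ^ α / L t) * f (t*u) := by
      simp only [hFdef]
      rw [integral_indicator measurableSet_Ioc, ← intervalIntegral.integral_of_le hT't1]
    rw [e4, intervalIntegral.integral_const_mul, e0, e2]
    rw [Real.rpow_sub ht0, Real.rpow_one]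
    have hLt : L t ≠ 0 := (hLpos t ht0).ne'
    field_simp
  have hzero : Tendsto (fun t => t ^ (α-1) / L t * ∫ s in Ioc (1:ℝ) T', f s) atTop
      (nhds 0) := by
    have h0 := (rpow_div_SV_tendsto_zero L hLmeas hLpos hSV
      (β := α - 1) (by linarith)).mul_const (∫ s in Ioc (1:ℝ) T', f s)
    rwa [zero_mul] at h0
  have hsum := hzero.add hDCT
  rw [zero_add] at hsum
  apply hsum.congr'
  filter_upwards [eventually_ge_atTop T', hrepr] with t ht hrep
  have hsplit : ∫ s in Ioc (1:ℝ) t, f s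
      = (∫ s in Ioc (1:ℝ) T', f s) + ∫ s in Ioc T' t, f s := by
    rw [← setIntegral_union (Ioc_disjoint_Ioc_of_le le_rfl) measurableSet_Ioc
      (hfInt 1 T' le_rfl) (hfInt T' t hT'1), Ioc_union_Ioc_eq_Ioc hT'1 ht]
  rw [hsplit, mul_add, hrep]

/-- For `α ∈ (0,1)`: if a Lévy measure `n` satisfies
`t^α L(t)^(-1) n((t,∞)) → q1/α` as `t → ∞`, then
`t^(α-1) L(t)^(-1) ∫_{(1,t]} y n(dy) → q1/(1-α)` as `t → ∞`. -/
theorem truncated_first_moment_limit_small_alpha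
    (α : ℝ) (hα0 : 0 < α) (hα1 : α < 1)
    (L : ℝ → ℝ) (hLmeas : Measurable L) (hLpos : ∀ x, 0 < x → 0 < L x)
    (hSV : ∀ c : ℝ, 0 < c → Tendsto (fun x => L (c * x) / L x) atTop (nhds 1))
    (n : Measure ℝ) (hn0 : n {0} = 0)
    (hn2 : (∫⁻ y, ENNReal.ofReal (min 1 (y ^ 2)) ∂n) < ⊤)
    (q1 : ℝ) (hq1 : 0 ≤ q1)
    (htail : Tendsto (fun t => t ^ α / L t * (n (Set.Ioi t)).toReal) atTop
      (nhds (q1 / α))) :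
    Tendsto (fun t => t ^ (α - 1) / L t * ∫ y in Set.Ioc 1 t, y ∂n) atTop
      (nhds (q1 / (1 - α))) := by
  set f : ℝ → ℝ := fun s => (n (Ioi s)).toReal with hfdef
  have hfin : n (Ioi (1:ℝ)) ≠ ⊤ := by
    have hcong : ∀ y ∈ Ioi (1:ℝ), (1:ℝ≥0∞) = ENNReal.ofReal (min 1 (y^2)) := by
      intro y hy
      have h1 : min 1 (y^2) = 1 := min_eq_left (by nlinarith [mem_Ioi.1 hy])
      rw [h1, ENNReal.ofReal_one]
    have h2 : n (Ioi (1:ℝ)) = ∫⁻ y in Ioi (1:ℝ), ENNReal.ofReal (min 1 (y^2)) ∂n := by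
      rw [← setLIntegral_congr_fun measurableSet_Ioi hcong,
        setLIntegral_one]
    rw [h2]
    exact ne_of_lt (lt_of_le_of_lt (setLIntegral_le_lintegral _ _) hn2)
  have hf0 : ∀ s, 0 ≤ f s := fun s => ENNReal.toReal_nonneg
  have hanti : Antitone (fun s : ℝ => n (Ioi s)) :=
    fun a b hab => measure_mono (Ioi_subset_Ioi hab)
  have hfmeas : Measurable f := hanti.measurable.ennreal_toReal
  have hfinIoi : ∀ s : ℝ, 1 ≤ s → n (Ioi s) ≠ ⊤ := by
    intro s hs
    exact fun habs => hfin (eq_top_mono (measure_mono (Ioi_subset_Ioi hs)) habs)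
  have hfb : ∀ s, 1 ≤ s → f s ≤ f 1 := by
    intro s hs
    exact ENNReal.toReal_mono hfin (measure_mono (Ioi_subset_Ioi hs))
  have hfInt : ∀ a b : ℝ, 1 ≤ a → IntegrableOn f (Ioc a b) volume := by
    intro a b ha
    apply Measure.integrableOn_of_bounded (M := f 1) measure_Ioc_lt_top.ne
      hfmeas.aestronglyMeasurable
    filter_upwards [ae_restrict_mem measurableSet_Ioc] with x hx
    rw [Real.norm_eq_abs, abs_of_nonneg (hf0 x)]
    exact hfb x (le_trans ha hx.1.le)
  -- the three limits
  have hB := limB α hα0 hα1 L hLmeas hLpos hSV f hfmeas hf0 hfb q1 hq1 htail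
  have hC : Tendsto (fun t => t ^ (α-1) / L t * ((t-1) * f t)) atTop (nhds (q1/α)) := by
    have h1 : Tendsto (fun t : ℝ => (t-1)/t) atTop (nhds 1) := by
      have h2 : Tendsto (fun t : ℝ => 1 - t⁻¹) atTop (nhds 1) := by
        have h3 : Tendsto (fun _ : ℝ => (1:ℝ)) atTop (nhds 1) := tendsto_const_nhds
        have h4 := h3.sub tendsto_inv_atTop_zero
        rwa [sub_zero] at h4
      apply h2.congr'
      filter_upwards [eventually_gt_atTop 0] with t ht0
      rw [sub_div, div_self ht0.ne', one_div]
    have h3 := htail.mul h1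
    rw [mul_one] at h3
    apply h3.congr'
    filter_upwards [eventually_gt_atTop 0] with t ht0
    rw [Real.rpow_sub ht0, Real.rpow_one]
    have hLt : L t ≠ 0 := (hLpos t ht0).ne'
    field_simp
    ring
  have hA : Tendsto (fun t => t ^ (α-1) / L t * (n (Ioc (1:ℝ) t)).toReal) atTop
      (nhds 0) := by
    apply squeeze_zero'
    · filter_upwards [eventually_gt_atTop 0] with t ht0
      exact mul_nonneg (div_nonneg (Real.rpow_pos_of_pos ht0 _).le (hLpos t ht0).le)
        ENNReal.toReal_nonneg
    · filter_upwards [eventually_gt_atTop 0] with t ht0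
      exact mul_le_mul_of_nonneg_left
        (ENNReal.toReal_mono hfin (measure_mono Ioc_subset_Ioi_self))
        (div_nonneg (Real.rpow_pos_of_pos ht0 _).le (hLpos t ht0).le)
    · have h0 := (rpow_div_SV_tendsto_zero L hLmeas hLpos hSV
        (β := α - 1) (by linarith)).mul_const ((n (Ioi (1:ℝ))).toReal)
      rwa [zero_mul] at h0
  -- combine
  have hcomb := (hA.add hB).sub hC
  have hval : (0 + q1/(α*(1-α))) - q1/α = q1/(1-α) := by
    have hαne : (α:ℝ) ≠ 0 := hα0.ne'
    have h1α : (1:ℝ) - α ≠ 0 := by linarith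
    field_simp
    ring
  rw [hval] at hcomb
  apply hcomb.congr'
  filter_upwards [eventually_ge_atTop 1] with t ht
  have hid := key_identity n hfin ht
  have hptwise : ∀ s ∈ Ioc (1:ℝ) t, (n (Ioc s t)).toReal = f s - f t := by
    intro s hs
    have hd : Ioc s t = Ioi s \ Ioi t := (Ioi_diff_Ioi (a := s) (b := t)).symm
    rw [hd, measure_diff (Ioi_subset_Ioi hs.2) measurableSet_Ioi.nullMeasurableSet
      (hfinIoi t (le_trans hs.1.le hs.2)),
      ENNReal.toReal_sub_of_le (measure_mono (Ioi_subset_Ioi hs.2))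
      (hfinIoi s hs.1.le)]
  have hsub : ∫ s in Ioc (1:ℝ) t, (n (Ioc s t)).toReal
      = (∫ s in Ioc (1:ℝ) t, f s) - (t-1) * f t := by
    rw [setIntegral_congr_fun measurableSet_Ioc hptwise,
      integral_sub (hfInt 1 t le_rfl)
        ((integrableOn_const_iff (C := f t)).2 (Or.inr measure_Ioc_lt_top)),
      setIntegral_const, Real.volume_real_Ioc_of_le ht, smul_eq_mul]
  rw [hid, hsub]
  ring
end
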